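/- (Energy dissipation of GSAV-EI2.) For any stabilizing constant κ > 0, any time step τ > 0, any initial grid function u_init, and every n ≥ 0, the GSAV-EI2 iterates satisfy 𝓔_h(u^{n+1}, s^{n+1}) ≤ 𝓔_h(uⁿ, sⁿ). -/

import Mathlib

open scoped BigOperators
noncomputable section

/-- Grid functions on the `M × M` periodic mesh, identified with vectors in `ℝ^{M²}`.
The sup norm of this Pi type is the discrete `L^∞` (maximum) norm. -/
abbrev GridFun (M : ℕ) : Type := Fin M × Fin M → ℝ

/-- Discrete inner product `⟨v,w⟩ = h² Σ_{i,j} v_{ij} w_{ij}`. -/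
def gridInner (M : ℕ) (h : ℝ) (v w : GridFun M) : ℝ :=
  h ^ 2 * ∑ p : Fin M × Fin M, v p * w p

/-- Discrete `L²` norm `‖v‖ = ⟨v,v⟩^{1/2}`. -/
def gridNorm (M : ℕ) (h : ℝ) (v : GridFun M) : ℝ :=
  Real.sqrt (gridInner M h v v)

/-- The discrete Laplacian as a linear map (periodic indexing via `Fin M` arithmetic). -/
def dLapL (M : ℕ) [NeZero M] (h : ℝ) : GridFun M →ₗ[ℝ] GridFun M where
  toFun v := fun p =>
    (v (p.1 + 1, p.2) + v (p.1 - 1, p.2) + v (p.1, p.2 + 1) + v (p.1, p.2 - 1) - 4 * v p) / h ^ 2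
  map_add' v w := by funext p; simp only [Pi.add_apply]; ring
  map_smul' c v := by funext p; simp only [Pi.smul_apply, smul_eq_mul, RingHom.id_apply]; ring

/-- The discrete Laplacian `Δ_h` as a continuous linear map on `ℝ^{M²}`. -/
def dLap (M : ℕ) [NeZero M] (h : ℝ) : GridFun M →L[ℝ] GridFun M :=
  LinearMap.toContinuousLinearMap (dLapL M h)

/-- Bulk energy `E_{1h}(v) = h² Σ F(v_{ij})`. -/
def E1h (M : ℕ) (h : ℝ) (F : ℝ → ℝ) (v : GridFun M) : ℝ :=
  h ^ 2 * ∑ p : Fin M × Fin M, F (v p)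

/-- Discrete gradient energy `(ε²/2) ‖∇_h v‖²`. -/
def gradE (M : ℕ) [NeZero M] (h ε : ℝ) (v : GridFun M) : ℝ :=
  ε ^ 2 / 2 * (h ^ 2 * ∑ p : Fin M × Fin M,
    (((v (p.1 + 1, p.2) - v p) / h) ^ 2 + ((v (p.1, p.2 + 1) - v p) / h) ^ 2))

/-- Modified energy `𝓔_h(v, r) = (ε²/2)‖∇_h v‖² + r`. -/
def modE (M : ℕ) [NeZero M] (h ε : ℝ) (v : GridFun M) (r : ℝ) : ℝ :=
  gradE M h ε v + r

/-- Discrete energy `E_h(v) = (ε²/2)‖∇_h v‖² + E_{1h}(v)`. -/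
def Eh (M : ℕ) [NeZero M] (h ε : ℝ) (F : ℝ → ℝ) (v : GridFun M) : ℝ :=
  gradE M h ε v + E1h M h F v

/-- `g(v, r) = σ(r) / σ(E_{1h}(v))`. -/
def gFun (M : ℕ) (h : ℝ) (F σ : ℝ → ℝ) (v : GridFun M) (r : ℝ) : ℝ :=
  σ r / σ (E1h M h F v)

/-- The linear operator `L_κ = κ g₀ I − ε² Δ_h`. -/
def Lkappa (M : ℕ) [NeZero M] (h ε κ g0 : ℝ) : GridFun M →L[ℝ] GridFun M :=
  (κ * g0) • (1 : GridFun M →L[ℝ] GridFun M) - ε ^ 2 • dLap M h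

/-- The nonlinear operator `N_κ(v, r) = g(v,r) f(v) + κ g₀ v` (with `f` applied entrywise). -/
def Nkappa (M : ℕ) (h κ g0 : ℝ) (f F σ : ℝ → ℝ) (v : GridFun M) (r : ℝ) : GridFun M :=
  fun p => gFun M h F σ v r * f (v p) + κ * g0 * v p

/-- One step of the GSAV-EI1 scheme. -/
def EI1step (M : ℕ) [NeZero M] (h ε κ τ : ℝ) (f F σ : ℝ → ℝ) (us : GridFun M × ℝ) :
    GridFun M × ℝ :=
  let g0 := gFun M h F σ us.1 us.2
  let Lk := Lkappa M h ε κ g0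
  let u1 := (NormedSpace.exp (-(τ • Lk))) us.1
    + (∫ θ in (0:ℝ)..τ, NormedSpace.exp (-((τ - θ) • Lk))) (Nkappa M h κ g0 f F σ us.1 us.2)
  (u1, us.2 - g0 * gridInner M h (fun p => f (us.1 p)) (u1 - us.1))

/-- The GSAV-EI1 iterates `(uⁿ, sⁿ)`. -/
def EI1 (M : ℕ) [NeZero M] (h ε κ τ : ℝ) (f F σ : ℝ → ℝ) (uinit : GridFun M) :
    ℕ → GridFun M × ℝ
  | 0 => (uinit, E1h M h F uinit)
  | n + 1 => EI1step M h ε κ τ f F σ (EI1 M h ε κ τ f F σ uinit n)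

/-- The midpoint values `(ũ^{n+1/2}, s̃^{n+1/2})` of the GSAV-EI2 scheme, as a function of
`(uⁿ, sⁿ)`; the prediction `(ũ^{n+1}, s̃^{n+1})` is a GSAV-EI1 step. -/
def EI2half (M : ℕ) [NeZero M] (h ε κ τ : ℝ) (f F σ : ℝ → ℝ) (us : GridFun M × ℝ) :
    GridFun M × ℝ :=
  let t := EI1step M h ε κ τ f F σ us
  ((1 / 2 : ℝ) • (us.1 + t.1), (us.2 + t.2) / 2)

/-- One step of the GSAV-EI2 scheme. -/
def EI2step (M : ℕ) [NeZero M] (h ε κ τ : ℝ) (f F σ : ℝ → ℝ) (us : GridFun M × ℝ) :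
    GridFun M × ℝ :=
  let t := EI1step M h ε κ τ f F σ us
  let m := EI2half M h ε κ τ f F σ us
  let gh := gFun M h F σ m.1 m.2
  let Lk := Lkappa M h ε κ gh
  let u1 := (NormedSpace.exp (-(τ • Lk))) us.1
    + (∫ θ in (0:ℝ)..τ, NormedSpace.exp (-((τ - θ) • Lk))) (Nkappa M h κ gh f F σ m.1 m.2)
  (u1, us.2 - gh * gridInner M h (fun p => f (m.1 p)) (u1 - us.1)
        + κ / 2 * gh * gridInner M h (u1 - t.1) (u1 - us.1))

/-- The GSAV-EI2 iterates `(uⁿ, sⁿ)`. -/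
def EI2 (M : ℕ) [NeZero M] (h ε κ τ : ℝ) (f F σ : ℝ → ℝ) (uinit : GridFun M) :
    ℕ → GridFun M × ℝ
  | 0 => (uinit, E1h M h F uinit)
  | n + 1 => EI2step M h ε κ τ f F σ (EI2 M h ε κ τ f F σ uinit n)

/-- One step of the stabilized generalized-SAV scheme (GSAV-EI1 with `e^{−τL}` replaced by
`(I + τL)^{−1}`). -/
def SAV1step (M : ℕ) [NeZero M] (h ε κ τ : ℝ) (f F σ : ℝ → ℝ) (us : GridFun M × ℝ) :
    GridFun M × ℝ :=
  let g0 := gFun M h F σ us.1 us.2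
  let Lk := Lkappa M h ε κ g0
  let u1 := (Ring.inverse ((1 : GridFun M →L[ℝ] GridFun M) + τ • Lk))
      (us.1 + τ • Nkappa M h κ g0 f F σ us.1 us.2)
  (u1, us.2 - g0 * gridInner M h (fun p => f (us.1 p)) (u1 - us.1))

/-- The stabilized generalized-SAV iterates `(uⁿ, sⁿ)`. -/
def SAV1 (M : ℕ) [NeZero M] (h ε κ τ : ℝ) (f F σ : ℝ → ℝ) (uinit : GridFun M) :
    ℕ → GridFun M × ℝ
  | 0 => (uinit, E1h M h F uinit)
  | n + 1 => SAV1step M h ε κ τ f F σ (SAV1 M h ε κ τ f F σ uinit n)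

/-!
The correction step of GSAV-EI2 is the exponential integrator for `u' = -A u + N` with the
operator `A = L_κ^{n+1/2}` and the forcing `N` frozen, and `A` is self-adjoint for `⟨·,·⟩`
(summation by parts). With `J = ∫₀^τ e^{-θA} dθ` and `v = A uⁿ - N` one gets
`u^{n+1} - uⁿ = -J v`, hence `⟨A ū - N, u^{n+1} - uⁿ⟩ = -½⟨J v, v⟩ - ½⟨e^{-τA} J v, v⟩ ≤ 0`
for the midpoint `ū`, because `e^{-θA} = (e^{-θA/2})²` is positive semidefinite. The update
of `s` is designed so that the change of the modified energy is exactly this inner product: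
the gradient part contributes `-ε²⟨Δ_h ū, u^{n+1} - uⁿ⟩`, and the stabilisation term
corrects for `ū - ũ^{n+1/2}`.
-/

open NormedSpace intervalIntegral

section ExponentialIntegrator

section NormedAlgebra

variable {𝔸 : Type*} [NormedRing 𝔸] [NormedAlgebra ℝ 𝔸]

lemma NormedSpace.commute_exp_neg_smul (A : 𝔸) (s t : ℝ) :
    Commute (exp (-(s • A))) (exp (-(t • A))) :=
  ((((Commute.refl A).smul_left s).smul_right t).neg_left.neg_right).exp

def integralExp (A : 𝔸) (τ : ℝ) : 𝔸 :=
  ∫ θ in (0 : ℝ)..τ, exp (-(θ • A))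

lemma integral_exp_neg_sub_smul (A : 𝔸) (τ : ℝ) :
    ∫ θ in (0 : ℝ)..τ, exp (-((τ - θ) • A)) = integralExp A τ := by
  simpa [integralExp] using integral_comp_sub_left (fun θ : ℝ => exp (-(θ • A))) τ (a := 0) (b := τ)

variable [CompleteSpace 𝔸]

lemma NormedSpace.exp_add_smul (x : 𝔸) (s t : ℝ) :
    exp ((s + t) • x) = exp (s • x) * exp (t • x) := by
  have hball : ∀ r : ℝ, r • x ∈ Metric.eball 0 (expSeries ℝ 𝔸).radius := by
    simp [expSeries_radius_eq_top]
  rw [add_smul, exp_add_of_commute_of_mem_ball (((Commute.refl x).smul_left s).smul_right t)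
    (hball s) (hball t)]

lemma NormedSpace.hasDerivAt_exp_neg_smul (A : 𝔸) (θ : ℝ) :
    HasDerivAt (fun t : ℝ => exp (-(t • A))) (-(A * exp (-(θ • A)))) θ := by
  simpa only [smul_neg, neg_mul] using hasDerivAt_exp_smul_const' (-A) θ

lemma NormedSpace.continuous_exp_neg_smul (A : 𝔸) : Continuous fun θ : ℝ => exp (-(θ • A)) :=
  continuous_iff_continuousAt.2 fun θ => (hasDerivAt_exp_neg_smul A θ).continuousAt

lemma mul_integralExp_eq_integral (A T : 𝔸) (τ : ℝ) :
    T * integralExp A τ = ∫ θ in (0 : ℝ)..τ, T * exp (-(θ • A)) :=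
  ((ContinuousLinearMap.mul ℝ _ T).intervalIntegral_comp_comm
    ((continuous_exp_neg_smul A).intervalIntegrable 0 τ)).symm

lemma integralExp_mul_eq_integral (A T : 𝔸) (τ : ℝ) :
    integralExp A τ * T = ∫ θ in (0 : ℝ)..τ, exp (-(θ • A)) * T :=
  (((ContinuousLinearMap.mul ℝ _).flip T).intervalIntegral_comp_comm
    ((continuous_exp_neg_smul A).intervalIntegrable 0 τ)).symm

lemma commute_integralExp {A T : 𝔸} (hT : ∀ θ : ℝ, Commute T (exp (-(θ • A)))) (τ : ℝ) :
    Commute T (integralExp A τ) := by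
  rw [Commute, SemiconjBy, mul_integralExp_eq_integral, integralExp_mul_eq_integral]
  exact integral_congr fun θ _ => (hT θ).eq

lemma mul_integralExp (A : 𝔸) (τ : ℝ) : A * integralExp A τ = 1 - exp (-(τ • A)) := by
  have hFTC := integral_eq_sub_of_hasDerivAt (fun θ _ => hasDerivAt_exp_neg_smul A θ)
    ((continuous_const.mul (continuous_exp_neg_smul A)).neg.intervalIntegrable 0 τ)
  rw [integral_neg, ← mul_integralExp_eq_integral, zero_smul, neg_zero, exp_zero] at hFTC
  rw [← neg_sub, ← hFTC, neg_neg]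

lemma integralExp_mul (A : 𝔸) (τ : ℝ) : integralExp A τ * A = 1 - exp (-(τ • A)) := by
  rw [← (commute_integralExp (fun θ => ((Commute.refl A).smul_right θ).neg_right.exp_right) τ).eq,
    mul_integralExp]

end NormedAlgebra

variable {E : Type*} [NormedAddCommGroup E] [NormedSpace ℝ E] {B : LinearMap.BilinForm ℝ E}

namespace LinearMap.BilinForm

variable [FiniteDimensional ℝ E]

def pairingCLM (B : LinearMap.BilinForm ℝ E) (v w : E) : (E →L[ℝ] E) →L[ℝ] ℝ :=
  (B.flip w).toContinuousLinearMap.comp (ContinuousLinearMap.apply ℝ E v)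

@[simp]
lemma pairingCLM_apply (v w : E) (T : E →L[ℝ] E) : B.pairingCLM v w T = B (T v) w := rfl

lemma apply_intervalIntegral {g : ℝ → E →L[ℝ] E} {a b : ℝ}
    (hg : IntervalIntegrable g MeasureTheory.volume a b) (v w : E) :
    B ((∫ θ in a..b, g θ) v) w = ∫ θ in a..b, B (g θ v) w :=
  ((B.pairingCLM v w).intervalIntegral_comp_comm hg).symm

lemma apply_exp (T : E →L[ℝ] E) (v w : E) :
    B (exp T v) w = ∑' n : ℕ, (n.factorial : ℝ)⁻¹ * B ((T ^ n) v) w := by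
  rw [exp_eq_tsum ℝ, ← B.pairingCLM_apply, ContinuousLinearMap.map_tsum _ (expSeries_summable' T)]
  simp

end LinearMap.BilinForm

namespace LinearMap.IsSelfAdjoint

lemma clm_one : B.IsSelfAdjoint ⇑(1 : E →L[ℝ] E) := isAdjointPair_id

lemma clm_smul {T : E →L[ℝ] E} (hT : B.IsSelfAdjoint T) (c : ℝ) : B.IsSelfAdjoint ⇑(c • T) := by
  rw [FunLike.coe_smul]
  exact hT.smul c

lemma clm_neg {T : E →L[ℝ] E} (hT : B.IsSelfAdjoint T) : B.IsSelfAdjoint ⇑(-T) := by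
  simpa using hT.clm_smul (-1)

lemma clm_sub {S T : E →L[ℝ] E} (hS : B.IsSelfAdjoint S) (hT : B.IsSelfAdjoint T) :
    B.IsSelfAdjoint ⇑(S - T) := by
  rw [FunLike.coe_sub]
  exact hS.sub hT

lemma clm_pow {T : E →L[ℝ] E} (hT : B.IsSelfAdjoint T) (n : ℕ) : B.IsSelfAdjoint ⇑(T ^ n) := by
  induction n with
  | zero => exact clm_one
  | succ n ih =>
    have := hT.comp ih
    rwa [← FunLike.coe_mul_eq_comp, ← FunLike.coe_mul_eq_comp, ← pow_succ, ← pow_succ'] at this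

variable [FiniteDimensional ℝ E]

lemma clm_exp (hB : B.IsSymm) {T : E →L[ℝ] E} (hT : B.IsSelfAdjoint T) :
    B.IsSelfAdjoint ⇑(exp T) := fun v w => by
  rw [hB.eq v, B.apply_exp, B.apply_exp]
  exact tsum_congr fun n => by rw [hT.clm_pow n, hB.eq v]

lemma exp_apply_self_nonneg (hB : B.IsPosSemidef) {T : E →L[ℝ] E} (hT : B.IsSelfAdjoint T)
    (v : E) : 0 ≤ B (exp T v) v := by
  have hsq := exp_add_smul T (1 / 2) (1 / 2)
  rw [add_halves, one_smul] at hsq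
  rw [hsq, FunLike.coe_mul_eq_comp, Function.comp_apply, (hT.clm_smul _).clm_exp hB.isSymm]
  exact hB.isNonneg.nonneg _

end LinearMap.IsSelfAdjoint

variable [FiniteDimensional ℝ E]

lemma isSelfAdjoint_exp_neg_smul (hB : B.IsSymm) {A : E →L[ℝ] E} (hA : B.IsSelfAdjoint A)
    (θ : ℝ) : B.IsSelfAdjoint ⇑(exp (-(θ • A))) :=
  (hA.clm_smul θ).clm_neg.clm_exp hB

lemma isSelfAdjoint_integralExp (hB : B.IsSymm) {A : E →L[ℝ] E} (hA : B.IsSelfAdjoint A)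
    (τ : ℝ) : B.IsSelfAdjoint ⇑(integralExp A τ) := fun v w => by
  have hint := (continuous_exp_neg_smul A).intervalIntegrable (μ := MeasureTheory.volume) 0 τ
  rw [integralExp, B.apply_intervalIntegral hint, hB.eq v, B.apply_intervalIntegral hint]
  exact integral_congr fun θ _ => by rw [isSelfAdjoint_exp_neg_smul hB hA θ, hB.eq v]

lemma integralExp_apply_self_nonneg (hB : B.IsPosSemidef) {A : E →L[ℝ] E}
    (hA : B.IsSelfAdjoint A) {τ : ℝ} (hτ : 0 ≤ τ) (v : E) : 0 ≤ B (integralExp A τ v) v := by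
  rw [integralExp, B.apply_intervalIntegral ((continuous_exp_neg_smul A).intervalIntegrable 0 τ)]
  exact integral_nonneg hτ fun θ _ => (hA.clm_smul θ).clm_neg.exp_apply_self_nonneg hB v

lemma exp_integralExp_apply_self_nonneg (hB : B.IsPosSemidef) {A : E →L[ℝ] E}
    (hA : B.IsSelfAdjoint A) {τ : ℝ} (hτ : 0 ≤ τ) (v : E) :
    0 ≤ B (exp (-(τ • A)) (integralExp A τ v)) v := by
  set Q := exp (-((τ / 2) • A))
  have hsq : exp (-(τ • A)) = Q * Q := by
    have := exp_add_smul (-A) (τ / 2) (τ / 2)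
    rwa [add_halves, smul_neg, smul_neg] at this
  have hQJ : Q (integralExp A τ v) = integralExp A τ (Q v) := by
    simpa using congr($((commute_integralExp (commute_exp_neg_smul A (τ / 2)) τ).eq) v)
  rw [hsq, FunLike.coe_mul_eq_comp, Function.comp_apply, isSelfAdjoint_exp_neg_smul hB.isSymm hA,
    hQJ]
  exact integralExp_apply_self_nonneg hB hA hτ (Q v)

theorem expIntegrator_dissipation (hB : B.IsPosSemidef) {A : E →L[ℝ] E}
    (hA : B.IsSelfAdjoint A) {τ : ℝ} (hτ : 0 ≤ τ) {u₀ u₁ : E} (N : E)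
    (hu₁ : u₁ = exp (-(τ • A)) u₀ + (∫ θ in (0 : ℝ)..τ, exp (-((τ - θ) • A))) N) :
    B (A ((1 / 2 : ℝ) • (u₀ + u₁)) - N) (u₁ - u₀) ≤ 0 := by
  rw [integral_exp_neg_sub_smul A τ] at hu₁
  set J := integralExp A τ
  set P := exp (-(τ • A))
  have hJA (w : E) : J (A w) = w - P w := by simpa using congr($(integralExp_mul A τ) w)
  have hincr : u₁ - u₀ = -J (A u₀ - N) := by
    rw [hu₁, map_sub, hJA]
    abel
  have hres : A ((1 / 2 : ℝ) • (u₀ + u₁)) - N = (A u₀ - N) + (1 / 2 : ℝ) • A (u₁ - u₀) := by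
    rw [show (1 / 2 : ℝ) • (u₀ + u₁) = u₀ + (1 / 2 : ℝ) • (u₁ - u₀) by module, map_add, map_smul]
    abel
  set v := A u₀ - N
  have hAJ : B (A (J v)) (J v) = B (J v) v - B (P (J v)) v := by
    rw [← isSelfAdjoint_integralExp hB.isSymm hA τ, hJA, LinearMap.map_sub₂]
  have hJv := integralExp_apply_self_nonneg hB hA hτ v
  have hPJv := exp_integralExp_apply_self_nonneg hB hA hτ v
  rw [hres, hincr]
  simp only [map_neg, map_add, map_smul, LinearMap.add_apply, LinearMap.smul_apply, smul_eq_mul,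
    LinearMap.neg_apply, hAJ, hB.isSymm.eq v]
  linarith

end ExponentialIntegrator

section PeriodicGrid

lemma sum_secondDiff_mul_eq_neg_sum_diff_mul_diff {G : Type*} [AddCommGroup G] [Fintype G]
    (e : G) (a b : G → ℝ) :
    ∑ x, (a (x + e) + a (x - e) - 2 * a x) * b x
      = -∑ x, (a (x + e) - a x) * (b (x + e) - b x) := by
  have hback : ∑ x, a (x - e) * b x = ∑ x, a x * b (x + e) :=
    Fintype.sum_equiv (Equiv.subRight e) _ _ fun x => by simp
  have hshift : ∑ x, a (x + e) * b (x + e) = ∑ x, a x * b x :=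
    Fintype.sum_equiv (Equiv.addRight e) _ _ fun x => rfl
  simp only [add_mul, sub_mul, mul_sub, Finset.sum_add_distrib, Finset.sum_sub_distrib,
    hback, hshift]
  simp only [mul_assoc, ← Finset.mul_sum]
  ring

variable (M : ℕ) (h : ℝ)

def gridInnerForm : LinearMap.BilinForm ℝ (GridFun M) :=
  h ^ 2 • dotProductBilin ℝ ℝ

lemma gridInnerForm_apply (v w : GridFun M) : gridInnerForm M h v w = gridInner M h v w := rfl

lemma isPosSemidef_gridInnerForm : (gridInnerForm M h).IsPosSemidef :=
  .smul ⟨⟨dotProduct_comm⟩, ⟨fun v => Finset.sum_nonneg fun p _ => mul_self_nonneg (v p)⟩⟩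
    (sq_nonneg h)

variable [NeZero M]

def gradInner (a b : GridFun M) : ℝ :=
  h ^ 2 * ∑ p : Fin M × Fin M,
    ((a (p.1 + 1, p.2) - a p) / h * ((b (p.1 + 1, p.2) - b p) / h)
      + (a (p.1, p.2 + 1) - a p) / h * ((b (p.1, p.2 + 1) - b p) / h))

lemma gradE_eq_gradInner (ε : ℝ) (v : GridFun M) :
    gradE M h ε v = ε ^ 2 / 2 * gradInner M h v v := by
  simp only [gradE, gradInner, sq]

lemma gradInner_comm (a b : GridFun M) : gradInner M h a b = gradInner M h b a := by
  rw [gradInner, gradInner]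
  congr 1
  exact Finset.sum_congr rfl fun p _ => by ring

lemma gradInner_add_sub (a b : GridFun M) :
    gradInner M h (a + b) (b - a) = gradInner M h b b - gradInner M h a a := by
  simp only [gradInner, ← mul_sub, ← Finset.sum_sub_distrib, Pi.add_apply, Pi.sub_apply]
  congr 1
  exact Finset.sum_congr rfl fun p _ => by ring

lemma dLap_apply (v : GridFun M) (p : Fin M × Fin M) :
    dLap M h v p
      = (v (p.1 + 1, p.2) + v (p.1 - 1, p.2) + v (p.1, p.2 + 1) + v (p.1, p.2 - 1) - 4 * v p)
          / h ^ 2 := rfl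

lemma gridInner_dLap (a b : GridFun M) : gridInner M h (dLap M h a) b = -gradInner M h a b := by
  have hx := sum_secondDiff_mul_eq_neg_sum_diff_mul_diff ((1, 0) : Fin M × Fin M) a b
  have hy := sum_secondDiff_mul_eq_neg_sum_diff_mul_diff ((0, 1) : Fin M × Fin M) a b
  have hadd : ∀ p q : Fin M × Fin M, p + q = (p.1 + q.1, p.2 + q.2) := fun _ _ => rfl
  have hsub : ∀ p q : Fin M × Fin M, p - q = (p.1 - q.1, p.2 - q.2) := fun _ _ => rfl
  simp only [hadd, hsub, add_zero, sub_zero] at hx hy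
  -- The factor `h ^ 2 / h ^ 2` keeps the identity true in the junk case `h = 0`.
  calc gridInner M h (dLap M h a) b
      = h ^ 2 / h ^ 2 * ∑ p : Fin M × Fin M,
          ((a (p.1 + 1, p.2) + a (p.1 - 1, p.2) - 2 * a p) * b p
            + (a (p.1, p.2 + 1) + a (p.1, p.2 - 1) - 2 * a p) * b p) := by
        rw [div_mul_eq_mul_div, mul_div_assoc, Finset.sum_div, gridInner]
        congr 1
        exact Finset.sum_congr rfl fun p _ => by rw [dLap_apply]; ring
    _ = h ^ 2 / h ^ 2 * -∑ p : Fin M × Fin M,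
          ((a (p.1 + 1, p.2) - a p) * (b (p.1 + 1, p.2) - b p)
            + (a (p.1, p.2 + 1) - a p) * (b (p.1, p.2 + 1) - b p)) := by
        rw [Finset.sum_add_distrib, hx, hy, Finset.sum_add_distrib, neg_add]
    _ = -gradInner M h a b := by
        rw [mul_neg, div_mul_eq_mul_div, mul_div_assoc, Finset.sum_div, gradInner]
        congr 2
        exact Finset.sum_congr rfl fun p _ => by ring

lemma isSelfAdjoint_dLap : (gridInnerForm M h).IsSelfAdjoint (dLap M h) := fun v w => by
  rw [(isPosSemidef_gridInnerForm M h).isSymm.eq v, gridInnerForm_apply, gridInnerForm_apply,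
    gridInner_dLap, gridInner_dLap, gradInner_comm]

lemma isSelfAdjoint_Lkappa (ε κ g : ℝ) : (gridInnerForm M h).IsSelfAdjoint (Lkappa M h ε κ g) :=
  (LinearMap.IsSelfAdjoint.clm_one.clm_smul _).clm_sub ((isSelfAdjoint_dLap M h).clm_smul _)

lemma gradE_sub_gradE (ε : ℝ) (u₀ u₁ : GridFun M) :
    gradE M h ε u₁ - gradE M h ε u₀
      = -(ε ^ 2 / 2) * gridInner M h (dLap M h (u₀ + u₁)) (u₁ - u₀) := by
  rw [gradE_eq_gradInner, gradE_eq_gradInner, gridInner_dLap, gradInner_add_sub]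
  ring

end PeriodicGrid

theorem modE_sub_modE_eq_gridInner {M : ℕ} [NeZero M] {h ε κ : ℝ} {f F σ : ℝ → ℝ}
    {u₀ t₁ u₁ m : GridFun M} {s r g : ℝ}
    (hm : m = (1 / 2 : ℝ) • (u₀ + t₁)) (hg : g = gFun M h F σ m r) :
    modE M h ε u₁ (s - g * gridInner M h (fun p => f (m p)) (u₁ - u₀)
        + κ / 2 * g * gridInner M h (u₁ - t₁) (u₁ - u₀)) - modE M h ε u₀ s
      = gridInner M h (Lkappa M h ε κ g ((1 / 2 : ℝ) • (u₀ + u₁)) - Nkappa M h κ g f F σ m r)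
          (u₁ - u₀) := by
  have hres : Lkappa M h ε κ g ((1 / 2 : ℝ) • (u₀ + u₁)) - Nkappa M h κ g f F σ m r
      = (κ / 2 * g) • (u₁ - t₁) - (ε ^ 2 / 2) • dLap M h (u₀ + u₁) - g • fun p => f (m p) := by
    have hN : Nkappa M h κ g f F σ m r = g • (fun p => f (m p)) + (κ * g) • m := by
      ext p
      simp [Nkappa, ← hg]
    rw [hN, hm]
    show (κ * g) • (1 / 2 : ℝ) • (u₀ + u₁) - ε ^ 2 • dLap M h ((1 / 2 : ℝ) • (u₀ + u₁)) - _ = _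
    rw [(dLap M h).map_smul]
    module
  rw [hres, ← gridInnerForm_apply M h (_ - _ - _), LinearMap.map_sub₂, LinearMap.map_sub₂,
    LinearMap.map_smul₂, LinearMap.map_smul₂, LinearMap.map_smul₂]
  simp only [smul_eq_mul, gridInnerForm_apply, modE]
  linear_combination gradE_sub_gradE M h ε u₀ u₁

theorem stmt_11_general (M : ℕ) [NeZero M] (h ε : ℝ)
    (f F σ : ℝ → ℝ)
    (κ : ℝ)
    (τ : ℝ) (hτ : 0 < τ) (uinit : GridFun M) :
    ∀ n : ℕ,
      modE M h ε (EI2 M h ε κ τ f F σ uinit (n + 1)).1 (EI2 M h ε κ τ f F σ uinit (n + 1)).2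
        ≤ modE M h ε (EI2 M h ε κ τ f F σ uinit n).1 (EI2 M h ε κ τ f F σ uinit n).2 := by
  intro n
  set m := EI2half M h ε κ τ f F σ (EI2 M h ε κ τ f F σ uinit n)
  exact sub_nonpos.1 ((modE_sub_modE_eq_gridInner rfl rfl).trans_le
    (expIntegrator_dissipation (isPosSemidef_gridInnerForm M h)
      (isSelfAdjoint_Lkappa M h ε κ (gFun M h F σ m.1 m.2)) hτ.le _ rfl))

/-- Energy dissipation of GSAV-EI2: for any `κ > 0`, `τ > 0`, initial grid function, and `n ≥ 0`,
`𝓔_h(u^{n+1}, s^{n+1}) ≤ 𝓔_h(uⁿ, sⁿ)`. -/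
theorem stmt_11 (M : ℕ) [NeZero M] (L h ε : ℝ) (hL : 0 < L) (hh : h = L / M) (hε : 0 < ε)
    (f F σ : ℝ → ℝ) (hF : ∀ x, HasDerivAt F (-f x) x)
    (hσ : ContDiff ℝ 1 σ) (hσpos : ∀ x, 0 < σ x) (hσmono : ∀ x, 0 ≤ deriv σ x)
    (κ : ℝ) (hκ : 0 < κ) (hf : ContDiff ℝ 1 f)
    (τ : ℝ) (hτ : 0 < τ) (uinit : GridFun M) :
    ∀ n : ℕ,
      modE M h ε (EI2 M h ε κ τ f F σ uinit (n + 1)).1 (EI2 M h ε κ τ f F σ uinit (n + 1)).2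
        ≤ modE M h ε (EI2 M h ε κ τ f F σ uinit n).1 (EI2 M h ε κ τ f F σ uinit n).2 :=
  stmt_11_general M h ε f F σ κ τ hτ uinit
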